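/- Let A be the 3×3 coloring matrix with rows (0,0,0), (1,0,0), (0,1,0). For n ≥ 2, the number of A-colored plane trees with n vertices and root color 3 is 2^{n-2}, and the total count t_A(n) = 2^{n-2} + 1. -/

import Mathlib

inductive CTree (α : Type) : Type
  | node : α → List (CTree α) → CTree α

namespace CTree

def color {α : Type} : CTree α → α
  | node c _ => c

def children {α : Type} : CTree α → List (CTree α)
  | node _ ts => ts

def size {α : Type} : CTree α → ℕ
  | node _ ts => 1 + (ts.attach.map fun t => size t.1).sum
decreasing_by
  have := List.sizeOf_lt_of_mem t.2
  simp only [CTree.node.sizeOf_spec]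
  omega

def Valid {α : Type} (A : Matrix α α ℕ) : CTree α → Prop
  | node c ts => ∀ t ∈ ts, A c t.color = 1 ∧ Valid A t

end CTree

/-- Number of `A`-colored plane trees with `n` vertices and root color `i`. -/
noncomputable def colorCount {m : ℕ} (A : Matrix (Fin m) (Fin m) ℕ) (i : Fin m) (n : ℕ) : ℕ :=
  {t : CTree (Fin m) | t.Valid A ∧ t.size = n ∧ t.color = i}.ncard

/-- Total number of `A`-colored plane trees with `n` vertices. -/
noncomputable def totalCount {α : Type} (A : Matrix α α ℕ) (n : ℕ) : ℕ :=
  {t : CTree α | t.Valid A ∧ t.size = n}.ncard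


/-!
A vertex of color 1 has no children and a vertex of color 2 has only leaves of color 1 as
children, so a tree of root color 2 is a "star", determined by its size. A tree of root color 3 is
therefore determined by the list of sizes of its subtrees, which is an arbitrary composition of
`n - 1`; there are `2 ^ (n - 2)` of these. Every other tree with `n ≥ 2` vertices is the star of
root color 2, which gives the one extra tree in the total count. (Colors `1, 2, 3` are
`0, 1, 2 : Fin 3` below.)
-/

namespace CTree

variable {α : Type} {A : Matrix α α ℕ}

theorem size_node (c : α) (ts : List (CTree α)) :
    (node c ts).size = 1 + (ts.map size).sum := by
  rw [size]
  simp

theorem node_color_children (t : CTree α) : node t.color t.children = t := by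
  cases t; rfl

theorem size_eq (t : CTree α) : t.size = 1 + (t.children.map size).sum := by
  cases t; exact size_node _ _

theorem one_le_size (t : CTree α) : 1 ≤ t.size := by
  rw [size_eq]; omega

theorem valid_node (c : α) (ts : List (CTree α)) :
    (node c ts).Valid A ↔ ∀ t ∈ ts, A c t.color = 1 ∧ t.Valid A := by
  rw [Valid]

theorem Valid.of_mem_children {t s : CTree α} (ht : t.Valid A) (hs : s ∈ t.children) :
    A t.color s.color = 1 ∧ s.Valid A := by
  cases t
  exact (valid_node _ _).1 ht s hs

theorem Valid.children_eq_nil {t : CTree α} (ht : t.Valid A) (h : ∀ j, A t.color j ≠ 1) :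
    t.children = [] :=
  List.eq_nil_iff_forall_not_mem.2 fun _ hs => h _ (ht.of_mem_children hs).1

def star (b a : α) (k : ℕ) : CTree α :=
  node b (List.replicate k (node a []))

theorem size_star (b a : α) (k : ℕ) : (star b a k).size = k + 1 := by
  rw [star, size_node, List.map_replicate, size_node]
  simp [Nat.add_comm]

theorem valid_star {b a : α} (hba : A b a = 1) (k : ℕ) : (star b a k).Valid A := by
  rw [star, valid_node]
  intro s hs
  rw [List.eq_of_mem_replicate hs, valid_node]
  exact ⟨hba, by simp⟩

theorem Valid.eq_star {t : CTree α} {a : α} (ht : t.Valid A) (hb : ∀ j, A t.color j = 1 → j = a)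
    (ha : ∀ j, A a j ≠ 1) : t = star t.color a (t.size - 1) := by
  have hleaf : ∀ s ∈ t.children, s = node a [] := by
    intro s hs
    obtain ⟨hcol, hs⟩ := ht.of_mem_children hs
    have hsa : s.color = a := hb _ hcol
    rw [← node_color_children s, hs.children_eq_nil (hsa ▸ ha), hsa]
  have hrep := List.eq_replicate_of_mem hleaf
  have hsize : t.size - 1 = t.children.length := by
    rw [size_eq, hrep, List.map_replicate, size_node]
    simp
  rw [hsize, star, ← hrep, node_color_children]

def ofBlocks (c b a : α) (L : List ℕ) : CTree α :=
  node c (L.map fun k => star b a (k - 1))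

theorem children_map_size_ofBlocks (c b a : α) {L : List ℕ} (hL : ∀ k ∈ L, 1 ≤ k) :
    (ofBlocks c b a L).children.map size = L := by
  rw [ofBlocks, children, List.map_map]
  conv_rhs => rw [← List.map_id L]
  refine List.map_congr_left fun k hk => ?_
  simp only [Function.comp_apply, size_star, id_eq]
  have := hL k hk
  omega

theorem valid_ofBlocks {c b a : α} (hcb : A c b = 1) (hba : A b a = 1) (L : List ℕ) :
    (ofBlocks c b a L).Valid A := by
  rw [ofBlocks, valid_node]
  intro s hs
  obtain ⟨k, -, rfl⟩ := List.mem_map.1 hs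
  exact ⟨hcb, valid_star hba _⟩

theorem Valid.eq_ofBlocks {t : CTree α} {b a : α} (ht : t.Valid A)
    (hc : ∀ j, A t.color j = 1 → j = b) (hb : ∀ j, A b j = 1 → j = a) (ha : ∀ j, A a j ≠ 1) :
    t = ofBlocks t.color b a (t.children.map size) := by
  rw [ofBlocks, List.map_map]
  conv_lhs => rw [← node_color_children t, ← List.map_id t.children]
  congr 1
  refine List.map_congr_left fun s hs => ?_
  obtain ⟨hcol, hs⟩ := ht.of_mem_children hs
  have hsb : s.color = b := hc _ hcol
  exact hsb ▸ hs.eq_star (hsb ▸ hb) ha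

def compositionEquiv {c b a : α} (hc : ∀ j, A c j = 1 ↔ j = b) (hb : ∀ j, A b j = 1 ↔ j = a)
    (ha : ∀ j, A a j ≠ 1) (n : ℕ) :
    Composition n ≃ {t : CTree α | t.Valid A ∧ t.size = n + 1 ∧ t.color = c} where
  toFun C := ⟨ofBlocks c b a C.blocks, valid_ofBlocks ((hc b).2 rfl) ((hb a).2 rfl) _,
    by rw [size_eq, children_map_size_ofBlocks _ _ _ fun k => C.one_le_blocks, C.blocks_sum]
       omega, rfl⟩
  invFun t := ⟨t.1.children.map size, fun hk => by
      obtain ⟨s, -, rfl⟩ := List.mem_map.1 hk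
      exact one_le_size s,
    by have := size_eq t.1; have := t.2.2.1; omega⟩
  left_inv C := Composition.ext (children_map_size_ofBlocks _ _ _ fun k => C.one_le_blocks)
  right_inv t := by
    obtain ⟨t, ht, -, rfl⟩ := t
    exact Subtype.ext (ht.eq_ofBlocks (fun j => (hc j).1) (fun j => (hb j).1) ha).symm

end CTree

open CTree

local notation "A₃" => (!![0, 0, 0; 1, 0, 0; 0, 1, 0] : Matrix (Fin 3) (Fin 3) ℕ)

theorem A₃_two_eq_one_iff : ∀ j, A₃ 2 j = 1 ↔ j = 1 := by decide

theorem A₃_one_eq_one_iff : ∀ j, A₃ 1 j = 1 ↔ j = 0 := by decide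

theorem A₃_zero_ne_one : ∀ j, A₃ 0 j ≠ 1 := by decide

theorem colorCount_A₃_two (n : ℕ) : colorCount A₃ 2 (n + 1) = 2 ^ (n - 1) := by
  rw [colorCount, ← Nat.card_coe_set_eq, ← Nat.card_congr
    (compositionEquiv A₃_two_eq_one_iff A₃_one_eq_one_iff A₃_zero_ne_one n),
    Nat.card_eq_fintype_card, composition_card]

theorem setOf_valid_size_A₃ {n : ℕ} (hn : 1 ≤ n) :
    {t : CTree (Fin 3) | t.Valid A₃ ∧ t.size = n + 1} =
      insert (star 1 0 n) {t | t.Valid A₃ ∧ t.size = n + 1 ∧ t.color = 2} := by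
  ext t
  simp only [Set.mem_ofPred_eq, Set.mem_insert_iff]
  constructor
  · rintro ⟨ht, hsize⟩
    match hcol : t.color with
    | 0 =>
      have := size_eq t
      rw [ht.children_eq_nil (hcol ▸ A₃_zero_ne_one), List.map_nil, List.sum_nil] at this
      omega
    | 1 =>
      left
      rw [ht.eq_star (hcol ▸ fun j => (A₃_one_eq_one_iff j).1) A₃_zero_ne_one, hcol, hsize]
      rfl
    | 2 => exact Or.inr ⟨ht, hsize, rfl⟩
  · rintro (rfl | ⟨ht, hsize, -⟩)
    · exact ⟨valid_star rfl n, size_star 1 0 n⟩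
    · exact ⟨ht, hsize⟩

theorem totalCount_A₃ {n : ℕ} (hn : 1 ≤ n) : totalCount A₃ (n + 1) = 2 ^ (n - 1) + 1 := by
  have hfin : {t : CTree (Fin 3) | t.Valid A₃ ∧ t.size = n + 1 ∧ t.color = 2}.Finite :=
    Set.finite_coe_iff.1 <| Finite.of_equiv _
      (compositionEquiv A₃_two_eq_one_iff A₃_one_eq_one_iff A₃_zero_ne_one n)
  have hstar : star 1 0 n ∉ {t : CTree (Fin 3) | t.Valid A₃ ∧ t.size = n + 1 ∧ t.color = 2} :=
    fun h => (by decide : (1 : Fin 3) ≠ 2) h.2.2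
  rw [totalCount, setOf_valid_size_A₃ hn, Set.ncard_insert_of_notMem hstar hfin, ← colorCount,
    colorCount_A₃_two]

/-- For the matrix with rows `(0,0,0), (1,0,0), (0,1,0)`, for `n ≥ 2` there are `2^{n-2}`
colored trees with root color 3, and `2^{n-2} + 1` in total. -/
theorem stmt11 (n : ℕ) (hn : 2 ≤ n) :
    colorCount (!![0, 0, 0; 1, 0, 0; 0, 1, 0] : Matrix (Fin 3) (Fin 3) ℕ) 2 n = 2 ^ (n - 2) ∧
    totalCount (!![0, 0, 0; 1, 0, 0; 0, 1, 0] : Matrix (Fin 3) (Fin 3) ℕ) n = 2 ^ (n - 2) + 1 := by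
  obtain ⟨m, rfl⟩ : ∃ m, n = m + 1 := ⟨n - 1, by omega⟩
  exact ⟨colorCount_A₃_two m, totalCount_A₃ (by omega)⟩
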